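/- arXiv:0912.2952 — 2 statements merged into one kernel-verified Lean document; each statement's English description precedes it below -/
import Mathlib

section
/- The protected exponentiation of Figure 2 runs for exactly m + H(d) loop iterations, where H(d) is the hamming weight of the key: starting with i = m−1, k = 0, and updating k := k XOR d[i], i := i − (if k then 0 else 1) each iteration, the loop guard i ≥ 0 becomes false after exactly m + (number of indices with d[i] = true) iterations. -/
/-!
Bit `i` of the key costs one iteration when it is clear and two when it is set: from `(i, false)`
a set bit first turns `k` on without moving `i`, and the next iteration reads the same bit again,
turns `k` off and moves on. Hence, from `(j - 1, false)` the loop reaches `(-1, false)` after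
exactly `∑_{i < j} cost(i)` iterations with `i ≥ 0` throughout, and `∑_{i < m} cost(i) = m + H(d)`.
-/

/-- One iteration of the protected exponentiation loop of Figure 2, acting on
the loop state `(i, k)`: `k := k XOR d[i]`, `i := i − (if k then 0 else 1)`. -/
def protStep (m : ℕ) (d : Fin m → Bool) (p : ℤ × Bool) : ℤ × Bool :=
  let i := p.1
  let k := p.2
  let k' := xor k (if h : 0 ≤ i ∧ i < (m : ℤ) then d ⟨i.toNat, by omega⟩ else false)
  (if k' then i else i - 1, k')

def hammingWeight {m : ℕ} (d : Fin m → Bool) : ℕ :=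
  (Finset.univ.filter (fun i => d i = true)).card

open Finset

theorem Function.iterate_add_forall_lt {α : Type*} (f : α → α) (P : α → Prop) {a b : ℕ} {x : α}
    (ha : ∀ n < a, P (f^[n] x)) (hb : ∀ n < b, P (f^[n] (f^[a] x))) :
    ∀ n < b + a, P (f^[n] x) := by
  intro n hn
  by_cases hna : n < a
  · exact ha n hna
  · obtain ⟨c, rfl⟩ := Nat.exists_eq_add_of_le (not_lt.mp hna)
    rw [Nat.add_comm, Function.iterate_add_apply]
    exact hb c (by omega)

section

variable {m : ℕ} (d : Fin m → Bool)

def bitCost (i : ℕ) : ℕ := if h : i < m then (if d ⟨i, h⟩ then 2 else 1) else 0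

theorem sum_range_bitCost : ∑ i ∈ range m, bitCost d i = m + hammingWeight d := by
  rw [← Fin.sum_univ_eq_sum_range]
  calc ∑ i : Fin m, bitCost d i = ∑ i : Fin m, (1 + if d i then 1 else 0) := by
        refine sum_congr rfl fun i _ => ?_
        cases hd : d i <;> simp [bitCost, hd]
    _ = m + hammingWeight d := by simp [sum_add_distrib, hammingWeight]

theorem protStep_natCast (j : Fin m) (k : Bool) :
    protStep m d ((j : ℤ), k) = (if xor k (d j) then (j : ℤ) else j - 1, xor k (d j)) := by
  have hj : (0 : ℤ) ≤ j ∧ (j : ℤ) < m := ⟨by positivity, by exact_mod_cast j.isLt⟩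
  simp [protStep, hj]

theorem iterate_protStep_bitCost (j : Fin m) :
    (protStep m d)^[bitCost d j] ((j : ℤ), false) = ((j : ℤ) - 1, false) ∧
    ∀ n < bitCost d j, ((protStep m d)^[n] ((j : ℤ), false)).1 = j := by
  rw [show bitCost d j = if d j then 2 else 1 from dif_pos j.isLt]
  cases hd : d j
  · simp [protStep_natCast, hd]
  · refine ⟨by simp [protStep_natCast, hd], fun n hn => ?_⟩
    simp only [if_true] at hn
    interval_cases n <;> simp [protStep_natCast, hd]

theorem iterate_protStep_sum_bitCost (j : ℕ) (hj : j ≤ m) :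
    (protStep m d)^[∑ i ∈ range j, bitCost d i] ((j : ℤ) - 1, false) = (-1, false) ∧
    ∀ n < ∑ i ∈ range j, bitCost d i, 0 ≤ ((protStep m d)^[n] ((j : ℤ) - 1, false)).1 := by
  induction j with
  | zero => simp
  | succ j ih =>
    obtain ⟨hreach, hnonneg⟩ := ih (by omega)
    obtain ⟨hblock, hindex⟩ := iterate_protStep_bitCost d ⟨j, by omega⟩
    have hstart : ((j + 1 : ℕ) : ℤ) - 1 = (j : ℤ) := by push_cast; ring
    rw [sum_range_succ, hstart]
    refine ⟨by rw [Function.iterate_add_apply, hblock, hreach], ?_⟩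
    refine Function.iterate_add_forall_lt _ (fun p : ℤ × Bool => 0 ≤ p.1)
      (fun n hn => ?_) (by rwa [hblock])
    rw [hindex n hn]
    positivity

end

/-- The protected exponentiation runs for exactly `m + H(d)` iterations:
starting from `(m−1, false)`, the index stays nonnegative for the first
`m + H(d)` states and is negative after `m + H(d)` iterations. -/
theorem protected_exponentiation_iterations (m : ℕ) (d : Fin m → Bool) :
    (∀ n < m + hammingWeight d,
        0 ≤ ((protStep m d)^[n] (((m : ℤ) - 1, false))).1) ∧
    ((protStep m d)^[m + hammingWeight d] (((m : ℤ) - 1, false))).1 < 0 := by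
  obtain ⟨hreach, hnonneg⟩ := iterate_protStep_sum_bitCost d m le_rfl
  rw [sum_range_bitCost] at hreach hnonneg
  exact ⟨hnonneg, by simp [hreach]⟩
end

section
/- The manifest all-zeros declassifier is sound: the non-early-exiting loop allz := 1; for i = m−1 down to 0: allz := allz * (if d[i] ≠ 0 then 0 else 1) has a transcript determined by m alone, and hence low-equal final stores (which include m) imply equal transcripts; moreover its final value of allz is 1 iff d is all zero. -/
/-- Transcript of the non-early-exiting all-zeros loop: `m` ones followed by a
zero, independent of the key. -/
def azManifestTranscript (m : ℕ) : List Bool :=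
  List.replicate m true ++ [false]

/-- Final value of `allz` computed by the loop
`allz := 1; for i = m−1 down to 0: allz := allz * (if d[i] ≠ 0 then 0 else 1)`. -/
def azFinal {m : ℕ} (d : Fin m → ℤ) : ℤ :=
  (List.ofFn fun i : Fin m => d i.rev).foldl
    (fun a x => a * (if x ≠ 0 then 0 else 1)) 1

theorem List.foldl_mul_ite_zero_one {M α : Type*} [MonoidWithZero M] (p : α → Prop)
    [DecidablePred p] (l : List α) (a : M) :
    l.foldl (fun b x => b * if p x then 0 else 1) a = a * if ∀ x ∈ l, ¬ p x then 1 else 0 := by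
  induction l generalizing a with
  | nil => simp
  | cons y l ih =>
    rw [List.foldl_cons, ih]
    by_cases hy : p y <;> simp [hy]

theorem azFinal_eq_ite {m : ℕ} (d : Fin m → ℤ) :
    azFinal d = if ∀ i, d i = 0 then 1 else 0 := by
  simp only [azFinal, List.foldl_mul_ite_zero_one, one_mul, List.forall_mem_ofFn_iff, not_not,
    Fin.rev_surjective.forall (p := fun i => d i = 0)]

theorem allzeros_manifest_sound_general (m m' : ℕ) (d : Fin m → ℤ)
    (hm : m = m') :
    azManifestTranscript m = azManifestTranscript m' ∧
    (azFinal d = 1 ↔ ∀ i, d i = 0) :=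
  ⟨congrArg azManifestTranscript hm, by simp [azFinal_eq_ite]⟩

/-- The manifest all-zeros declassifier is sound: the transcript is determined
by `m` alone (so low-equal final stores, which include `m`, imply equal
transcripts), and the final `allz` is `1` iff `d` is all zero. -/
theorem allzeros_manifest_sound (m m' : ℕ) (d : Fin m → ℤ) (d' : Fin m' → ℤ)
    (hm : m = m') :
    azManifestTranscript m = azManifestTranscript m' ∧
    (azFinal d = 1 ↔ ∀ i, d i = 0) :=
  allzeros_manifest_sound_general m m' d hm
end
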